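/- arXiv:2111.04832 — 2 statements merged into one kernel-verified Lean document; each statement's English description precedes it below -/
import Mathlib

section
/- For sets X and Y, the hyperspaces 2^{X_d}_f and 2^{Y_d}_f (nonempty finite subsets with the upper semifinite topology) are homeomorphic if and only if X and Y have the same cardinality; the same holds for 2^{X_d}_u and 2^{Y_d}_u. -/
open Set Topology TopologicalSpace

/-- The set of nonempty subsets of `X`: the hyperspace of the discrete space on `X`. -/
def NESet (X : Type*) := {C : Set X // C.Nonempty}

/-- The upper semifinite topology on the hyperspace of the discrete space `X`,
generated by the sets `B(U) = {C | C ⊆ U}` for `U ⊆ X`. -/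
instance NESet.topologicalSpace (X : Type*) : TopologicalSpace (NESet X) :=
  TopologicalSpace.generateFrom {S | ∃ U : Set X, S = {C : NESet X | C.1 ⊆ U}}

/-- The set of nonempty finite subsets of `X`. -/
def NEFin (X : Type*) := {C : Set X // C.Nonempty ∧ C.Finite}

/-- Inclusion of the nonempty finite subsets into the nonempty subsets. -/
noncomputable def NEFin.incl {X : Type*} (C : NEFin X) : NESet X := ⟨C.1, C.2.1⟩

/-- The subspace topology on the nonempty finite subsets, induced by the
upper semifinite topology. -/
noncomputable instance NEFin.topologicalSpace (X : Type*) : TopologicalSpace (NEFin X) :=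
  TopologicalSpace.induced NEFin.incl inferInstance

universe u

/-! Open sets of the upper semifinite topology are closed under passing to nonempty subsets,
so the only points with an open singleton are the singletons `{x}`, whose neighbourhood
`B({x})` contains nothing else. A homeomorphism preserves the points with open singletons,
which recovers the cardinality of `X`; conversely a bijection `X ≃ Y` induces
homeomorphisms by taking images. -/

def Homeomorph.isOpenSingletonEquiv {Z W : Type*} [TopologicalSpace Z] [TopologicalSpace W]
    (h : Z ≃ₜ W) : {z : Z // IsOpen {z}} ≃ {w : W // IsOpen {w}} :=
  h.toEquiv.subtypeEquiv fun z => by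
    rw [← h.isOpen_image, image_singleton]
    rfl

noncomputable def Equiv.isOpenSingletonOfInjective {X Z : Type*} [TopologicalSpace Z]
    {f : X → Z} (hf : Function.Injective f) (h : ∀ z, IsOpen {z} ↔ z ∈ range f) :
    X ≃ {z : Z // IsOpen {z}} :=
  (Equiv.ofInjective f hf).trans (Equiv.subtypeEquivRight fun z => (h z).symm)

namespace NESet

variable {X Y : Type*}

def pure (x : X) : NESet X := ⟨{x}, singleton_nonempty x⟩

lemma pure_injective : Function.Injective (pure : X → NESet X) := fun _ _ hxy =>
  singleton_injective (congrArg Subtype.val hxy)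

lemma isOpen_setOf_subset (U : Set X) : IsOpen {C : NESet X | C.1 ⊆ U} :=
  GenerateOpen.basic _ ⟨U, rfl⟩

lemma IsOpen.mem_of_subset {S : Set (NESet X)} (hS : IsOpen S) {C D : NESet X} (hC : C ∈ S)
    (hDC : D.1 ⊆ C.1) : D ∈ S := by
  induction hS generalizing C with
  | basic V hV => obtain ⟨U, rfl⟩ := hV; exact hDC.trans hC
  | univ => trivial
  | inter _ _ _ _ ih₁ ih₂ => exact ⟨ih₁ hC.1 hDC, ih₂ hC.2 hDC⟩
  | sUnion _ _ ih => obtain ⟨T, hT, hCT⟩ := hC; exact ⟨T, hT, ih T hT hCT hDC⟩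

lemma setOf_subset_singleton (x : X) : {C : NESet X | C.1 ⊆ {x}} = {pure x} := by
  ext C
  simp only [mem_ofPred_eq, mem_singleton_iff, C.2.subset_singleton_iff]
  exact ⟨fun h => Subtype.ext h, fun h => h ▸ rfl⟩

lemma isOpen_singleton_iff (C : NESet X) : IsOpen {C} ↔ C ∈ range pure := by
  refine ⟨fun hC => ?_, ?_⟩
  · obtain ⟨x, hx⟩ := C.2
    exact ⟨x, IsOpen.mem_of_subset hC rfl (singleton_subset_iff.2 hx)⟩
  · rintro ⟨x, rfl⟩
    rw [← setOf_subset_singleton]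
    exact isOpen_setOf_subset _

noncomputable def equivIsOpenSingleton (X : Type*) : X ≃ {C : NESet X // IsOpen {C}} :=
  Equiv.isOpenSingletonOfInjective pure_injective isOpen_singleton_iff

def map (f : X → Y) (C : NESet X) : NESet Y := ⟨f '' C.1, C.2.image f⟩

lemma continuous_map (f : X → Y) : Continuous (map f) := by
  refine continuous_generateFrom_iff.2 ?_
  rintro _ ⟨U, rfl⟩
  simpa only [preimage_ofPred_eq, map, image_subset_iff] using isOpen_setOf_subset (f ⁻¹' U)

lemma map_map {Z : Type*} (f : X → Y) (g : Y → Z) (C : NESet X) :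
    map g (map f C) = map (g ∘ f) C :=
  Subtype.ext (image_image g f C.1)

lemma map_id (C : NESet X) : map id C = C := Subtype.ext (image_id C.1)

noncomputable def homeomorphOfEquiv (e : X ≃ Y) : NESet X ≃ₜ NESet Y where
  toFun := map e
  invFun := map e.symm
  left_inv C := by simp [map_map, map_id]
  right_inv C := by simp [map_map, map_id]
  continuous_toFun := continuous_map e
  continuous_invFun := continuous_map e.symm

end NESet

namespace NEFin

variable {X Y : Type*}

def pure (x : X) : NEFin X := ⟨{x}, singleton_nonempty x, finite_singleton x⟩

lemma incl_pure (x : X) : incl (pure x) = NESet.pure x := rfl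

lemma incl_injective : Function.Injective (incl : NEFin X → NESet X) := fun _ _ h =>
  Subtype.ext (congrArg (fun C : NESet X => C.1) h)

lemma isOpen_singleton_iff (C : NEFin X) : IsOpen {C} ↔ C ∈ range pure := by
  refine ⟨fun hC => ?_, ?_⟩
  · obtain ⟨V, hV, hpre⟩ := isOpen_induced_iff.1 hC
    obtain ⟨x, hx⟩ := C.2.1
    have hCV : incl C ∈ V := by rw [← mem_preimage, hpre]; rfl
    have hxV : incl (pure x) ∈ V :=
      NESet.IsOpen.mem_of_subset hV hCV (singleton_subset_iff.2 hx)
    exact ⟨x, by rw [← mem_singleton_iff, ← hpre]; exact hxV⟩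
  · rintro ⟨x, rfl⟩
    rw [← (incl_injective (X := X)).preimage_image {pure x}, image_singleton, incl_pure,
      ← NESet.setOf_subset_singleton]
    exact (NESet.isOpen_setOf_subset _).preimage continuous_induced_dom

lemma pure_injective : Function.Injective (pure : X → NEFin X) := fun _ _ hxy =>
  NESet.pure_injective (congrArg incl hxy)

noncomputable def equivIsOpenSingleton (X : Type*) : X ≃ {C : NEFin X // IsOpen {C}} :=
  Equiv.isOpenSingletonOfInjective pure_injective isOpen_singleton_iff

def map (f : X → Y) (C : NEFin X) : NEFin Y := ⟨f '' C.1, C.2.1.image f, C.2.2.image f⟩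

lemma incl_map (f : X → Y) (C : NEFin X) : incl (map f C) = NESet.map f (incl C) := rfl

lemma continuous_map (f : X → Y) : Continuous (map f) :=
  continuous_induced_rng.2 <| (NESet.continuous_map f).comp
    (continuous_induced_dom : Continuous (incl : NEFin X → NESet X))

noncomputable def homeomorphOfEquiv (e : X ≃ Y) : NEFin X ≃ₜ NEFin Y where
  toFun := map e
  invFun := map e.symm
  left_inv C := incl_injective (by simp [incl_map, NESet.map_map, NESet.map_id])
  right_inv C := incl_injective (by simp [incl_map, NESet.map_map, NESet.map_id])
  continuous_toFun := continuous_map e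
  continuous_invFun := continuous_map e.symm

end NEFin

/-- `2^{X_d}_f` and `2^{Y_d}_f` are homeomorphic iff `X` and `Y` have the same cardinality,
and likewise for `2^{X_d}_u` and `2^{Y_d}_u`. -/
theorem stmt10 (X Y : Type u) :
    (Nonempty (NEFin X ≃ₜ NEFin Y) ↔ Cardinal.mk X = Cardinal.mk Y) ∧
    (Nonempty (NESet X ≃ₜ NESet Y) ↔ Cardinal.mk X = Cardinal.mk Y) := by
  refine ⟨⟨fun ⟨h⟩ => ?_, fun hXY => ?_⟩, ⟨fun ⟨h⟩ => ?_, fun hXY => ?_⟩⟩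
  · exact Cardinal.mk_congr <| (NEFin.equivIsOpenSingleton X).trans <|
      h.isOpenSingletonEquiv.trans (NEFin.equivIsOpenSingleton Y).symm
  · exact ⟨NEFin.homeomorphOfEquiv (Cardinal.eq.1 hXY).some⟩
  · exact Cardinal.mk_congr <| (NESet.equivIsOpenSingleton X).trans <|
      h.isOpenSingletonEquiv.trans (NESet.equivIsOpenSingleton Y).symm
  · exact ⟨NESet.homeomorphOfEquiv (Cardinal.eq.1 hXY).some⟩
end

section
/- For an infinite set X, the space 2^{X_d}_f is locally finite but not strongly locally finite: every point C has the finite minimal neighborhood 2^C, but the closure of {C} in 2^{X_d}_f is infinite. -/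
open Set Topology TopologicalSpace

/-! Open sets of the upper semifinite topology are closed under passing to nonempty subsets. So
every open set containing `C` contains `2^C`, which is finite for finite `C`; and dually every
`D ⊇ C` specializes from `C`, i.e. lies in the closure of `{C}`. For infinite `X` the sets
`insert x C` with `x ∉ C` already give infinitely many such `D`. -/

namespace NESet

variable {X : Type*}

theorem mem_of_subset_of_mem_of_isOpen {W : Set (NESet X)} (hW : IsOpen W) {D E : NESet X}
    (hE : E ∈ W) (hDE : D.1 ⊆ E.1) : D ∈ W := by
  induction hW generalizing D E with
  | basic S hS =>
    obtain ⟨U, rfl⟩ := hS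
    exact hDE.trans hE
  | univ => trivial
  | inter S T _ _ ihS ihT => exact ⟨ihS hE.1 hDE, ihT hE.2 hDE⟩
  | sUnion 𝒮 _ ih =>
    obtain ⟨S, hS, hE⟩ := hE
    exact ⟨S, hS, ih S hS hE hDE⟩

end NESet

namespace NEFin

variable {X : Type*}

theorem mem_of_subset_of_mem_of_isOpen {V : Set (NEFin X)} (hV : IsOpen V) {D E : NEFin X}
    (hE : E ∈ V) (hDE : D.1 ⊆ E.1) : D ∈ V := by
  obtain ⟨W, hW, rfl⟩ := isOpen_induced_iff.mp hV
  exact NESet.mem_of_subset_of_mem_of_isOpen hW hE hDE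

theorem isOpen_setOf_subset (U : Set X) : IsOpen {D : NEFin X | D.1 ⊆ U} :=
  isOpen_induced_iff.mpr
    ⟨{E : NESet X | E.1 ⊆ U}, isOpen_generateFrom_of_mem ⟨U, rfl⟩, rfl⟩

theorem finite_setOf_subset {s : Set X} (hs : s.Finite) : {D : NEFin X | D.1 ⊆ s}.Finite :=
  hs.finite_subsets.preimage Subtype.val_injective.injOn

theorem specializes_of_subset {C D : NEFin X} (h : C.1 ⊆ D.1) : C ⤳ D :=
  specializes_iff_forall_open.mpr fun _ hV hD => mem_of_subset_of_mem_of_isOpen hV hD h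

theorem infinite_setOf_superset [Infinite X] (C : NEFin X) :
    {D : NEFin X | C.1 ⊆ D.1}.Infinite :=
  infinite_of_injOn_mapsTo
    (f := fun x => (⟨insert x C.1, ⟨x, mem_insert x _⟩, C.2.2.insert x⟩ : NEFin X))
    (fun _ hx _ _ hxy => (Set.insert_inj hx).mp (congrArg Subtype.val hxy))
    (fun _ _ => subset_insert _ _) C.2.2.infinite_compl

end NEFin

/-- For an infinite set `X`, the space `2^{X_d}_f` is locally finite but not strongly
locally finite: every point `C` has the finite minimal open neighborhood `2^C`, but the
closure of `{C}` is infinite. -/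
theorem stmt12 (X : Type*) [Infinite X] :
    (∀ C : NEFin X,
      IsOpen {D : NEFin X | D.1 ⊆ C.1} ∧
      C ∈ {D : NEFin X | D.1 ⊆ C.1} ∧
      {D : NEFin X | D.1 ⊆ C.1}.Finite ∧
      ∀ V : Set (NEFin X), IsOpen V → C ∈ V → {D : NEFin X | D.1 ⊆ C.1} ⊆ V) ∧
    ∀ C : NEFin X, (closure {C}).Infinite := by
  refine ⟨fun C => ⟨NEFin.isOpen_setOf_subset C.1, subset_refl C.1,
    NEFin.finite_setOf_subset C.2.2, ?_⟩, fun C => ?_⟩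
  · exact fun V hV hCV _ hD => NEFin.mem_of_subset_of_mem_of_isOpen hV hCV hD
  · exact (NEFin.infinite_setOf_superset C).mono fun D hD =>
      specializes_iff_mem_closure.mp (NEFin.specializes_of_subset hD)
end
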